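/- arXiv:2205.07010 — 5 statements merged into one kernel-verified Lean document; each statement's English description precedes it below -/
import Mathlib

section
/- Let X be a bipartite mixed graph with a unique perfect matching and let H_α be its α-hermitian adjacency matrix for a unit complex number α. Then H_α is non-singular (invertible). -/
open SimpleGraph
open scoped Classical

noncomputable section

variable {V : Type*}

structure MixedGraph (V : Type*) where
  digon : V → V → Prop
  arc : V → V → Prop
  digon_symm : ∀ u v, digon u v → digon v u
  digon_irrefl : ∀ v, ¬ digon v v
  arc_irrefl : ∀ v, ¬ arc v v
  arc_asymm : ∀ u v, arc u v → ¬ arc v u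
  digon_arc : ∀ u v, digon u v → ¬ arc u v ∧ ¬ arc v u

def MixedGraph.underlying (X : MixedGraph V) : SimpleGraph V where
  Adj u v := X.digon u v ∨ X.arc u v ∨ X.arc v u
  symm := by
    constructor
    intro u v h
    rcases h with h | h | h
    · exact Or.inl (X.digon_symm u v h)
    · exact Or.inr (Or.inr h)
    · exact Or.inr (Or.inl h)
  loopless := by
    constructor
    intro v h
    rcases h with h | h | h
    · exact X.digon_irrefl v h
    · exact X.arc_irrefl v h
    · exact X.arc_irrefl v h

/-- The α-hermitian adjacency matrix of a mixed graph. -/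
def Halpha (X : MixedGraph V) (α : ℂ) : Matrix V V ℂ := fun u v =>
  if X.digon u v then 1
  else if X.arc u v then α
  else if X.arc v u then (starRingEnd ℂ) α
  else 0

/-- The value h_α of a walk: product of matrix entries along consecutive vertices. -/
def hWalk (X : MixedGraph V) (α : ℂ) {u v : V} (p : X.underlying.Walk u v) : ℂ :=
  (p.darts.map (fun d => Halpha X α d.toProd.1 d.toProd.2)).prod

/-- A co-augmenting path w.r.t. a matching edge set `M`: a path whose edges alternate
matching / non-matching, beginning and ending with matching edges. -/
def IsCoAugmenting (G : SimpleGraph V) (M : Set (Sym2 V)) {u v : V} (p : G.Walk u v) : Prop :=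
  p.IsPath ∧ Odd p.edges.length ∧
    ∀ i : Fin p.edges.length, (p.edges.get i ∈ M ↔ Even i.val)

/-- `G` is unicyclic: connected with exactly one cycle (all cycles have the same edge set). -/
def IsUnicyclic (G : SimpleGraph V) : Prop :=
  G.Connected ∧ (∃ (u : V) (c : G.Walk u u), c.IsCycle) ∧
    ∀ (u v : V) (c : G.Walk u u) (d : G.Walk v v), c.IsCycle → d.IsCycle →
      {e | e ∈ c.edges} = {e | e ∈ d.edges}

/-- A peg: a matching edge incident to a vertex of the cycle `c` but not an edge of `c`. -/
def IsPeg (G : SimpleGraph V) (M : G.Subgraph) {u : V} (c : G.Walk u u) (e : Sym2 V) : Prop :=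
  e ∈ M.edgeSet ∧ e ∉ c.edges ∧ ∃ x ∈ c.support, x ∈ e

/-- Restriction of a matching to an induced subgraph. -/
def restrictMatching (G : SimpleGraph V) (M : G.Subgraph) (s : Set V) :
    (G.induce s).Subgraph where
  verts := Set.univ
  Adj a b := M.Adj a.1 b.1
  adj_sub h := M.adj_sub h
  edge_vert _ := Set.mem_univ _
  symm := ⟨fun _ _ h => M.adj_symm h⟩

/-- The sign `f_W` at the end of a walk: starts at 1 and flips across non-matching edges. -/
def fEnd (G : SimpleGraph V) (M : Set (Sym2 V)) : ∀ {u v : V}, G.Walk u v → ℤ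
  | _, _, SimpleGraph.Walk.nil => 1
  | _, _, @SimpleGraph.Walk.cons _ _ u w _ _ p =>
      if s(u, w) ∈ M then fEnd G M p else - fEnd G M p

end

/-!
Every nonzero term of the Leibniz expansion of `det H_α` comes from a permutation `σ` with
`v ~ σ v` for all `v`. In a bipartite graph, following `σ` from one colour class and `σ⁻¹`
from the other is a fixed-point-free involution along edges, i.e. a perfect matching; choosing
either colour class for `σ`, uniqueness of the perfect matching forces `σ` to be the matching
involution. So the expansion has exactly one nonzero term, and `det H_α ≠ 0`.
-/

open Equiv Function

namespace Matrix

variable {n R : Type*} [Fintype n] [DecidableEq n] [CommRing R]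

theorem det_eq_of_forall_prod_ne_zero_imp_eq (A : Matrix n n R) (σ₀ : Perm n)
    (h : ∀ σ : Perm n, (∀ i, A (σ i) i ≠ 0) → σ = σ₀) :
    A.det = Perm.sign σ₀ • ∏ i, A (σ₀ i) i := by
  rw [det_apply, Finset.sum_eq_single σ₀ _ (by simp)]
  intro σ _ hσ
  obtain ⟨i, hi⟩ : ∃ i, A (σ i) i = 0 := by
    by_contra! hne
    exact hσ (h σ hne)
  rw [Finset.prod_eq_zero (f := fun j => A (σ j) j) (Finset.mem_univ i) hi, smul_zero]

end Matrix

namespace SimpleGraph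

variable {V : Type*} {G : SimpleGraph V}

theorem Coloring.eq_of_adj_of_ne (c : G.Coloring (Fin 2)) {a b : V} (hab : G.Adj a b)
    {k : Fin 2} (ha : c a ≠ k) : c b = k := by
  have hne := c.valid hab
  revert ha hne
  generalize c a = x
  generalize c b = y
  revert x y k
  decide

def Subgraph.ofInvolutive (τ : V → V) (hτ : Involutive τ) (hadj : ∀ v, G.Adj v (τ v)) :
    G.Subgraph where
  verts := Set.univ
  Adj a b := τ a = b
  adj_sub := by
    rintro a _ rfl
    exact hadj a
  edge_vert _ := Set.mem_univ _
  symm := ⟨by rintro a _ rfl; exact hτ a⟩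

theorem Subgraph.isPerfectMatching_ofInvolutive (τ : V → V) (hτ : Involutive τ)
    (hadj : ∀ v, G.Adj v (τ v)) : (ofInvolutive τ hτ hadj).IsPerfectMatching :=
  Subgraph.isPerfectMatching_iff.mpr fun v => ⟨τ v, rfl, fun _ h => Eq.symm h⟩

namespace Subgraph.IsPerfectMatching

variable {M : G.Subgraph}

theorem exists_perm_adj (hM : M.IsPerfectMatching) : ∃ σ : Perm V, ∀ v, M.Adj v (σ v) := by
  choose f hf hf_uniq using isPerfectMatching_iff.mp hM
  have hinv : Involutive f := fun v => (hf_uniq (f v) v (hf v).symm).symm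
  exact ⟨hinv.toPerm f, hf⟩

theorem adj_perm_of_unique (c : G.Coloring (Fin 2))
    (huniq : ∀ N : G.Subgraph, N.IsPerfectMatching → N = M)
    {σ : Perm V} (hσ : ∀ v, G.Adj v (σ v)) (v : V) : M.Adj v (σ v) := by
  have hσ' : ∀ v, G.Adj v (σ.symm v) := fun v => by
    simpa using (hσ (σ.symm v)).symm
  let τ : V → V := fun u => if c u = c v then σ u else σ.symm u
  have hτ : Involutive τ := by
    intro u
    by_cases hu : c u = c v
    · have : c (σ u) ≠ c v := hu ▸ (c.valid (hσ u)).symm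
      simp [τ, hu, this]
    · simp [τ, hu, c.eq_of_adj_of_ne (hσ' u) hu]
  have hτadj : ∀ u, G.Adj u (τ u) := fun u => by
    by_cases hu : c u = c v
    · simpa [τ, hu] using hσ u
    · simpa [τ, hu] using hσ' u
  have hN := huniq _ (isPerfectMatching_ofInvolutive τ hτ hτadj)
  rw [← hN]
  simp [ofInvolutive, τ]

theorem perm_eq_of_unique (hM : M.IsPerfectMatching) (c : G.Coloring (Fin 2))
    (huniq : ∀ N : G.Subgraph, N.IsPerfectMatching → N = M)
    {σ τ : Perm V} (hσ : ∀ v, G.Adj v (σ v)) (hτ : ∀ v, G.Adj v (τ v)) : σ = τ :=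
  Equiv.ext fun v => ((isPerfectMatching_iff.mp hM v).unique
    (adj_perm_of_unique c huniq hσ v) (adj_perm_of_unique c huniq hτ v))

end Subgraph.IsPerfectMatching

end SimpleGraph

theorem Halpha_ne_zero_iff {V : Type*} (X : MixedGraph V) {α : ℂ} (hα : α ≠ 0) {u v : V} :
    Halpha X α u v ≠ 0 ↔ X.underlying.Adj u v := by
  change _ ↔ X.digon u v ∨ X.arc u v ∨ X.arc v u
  unfold Halpha
  split_ifs <;> simp_all

/-- The α-hermitian adjacency matrix of a bipartite mixed graph with a unique perfect
matching is non-singular. -/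
theorem stmt5 {V : Type*} [Fintype V] [DecidableEq V]
    (X : MixedGraph V) (α : ℂ) (hα : ‖α‖ = 1)
    (hbip : X.underlying.Colorable 2)
    (M : X.underlying.Subgraph) (hM : M.IsPerfectMatching)
    (huniq : ∀ N : X.underlying.Subgraph, N.IsPerfectMatching → N = M) :
    (Halpha X α).det ≠ 0 := by
  obtain ⟨c⟩ := hbip
  have hα0 : α ≠ 0 := by
    rintro rfl
    simp at hα
  obtain ⟨σ₀, hσ₀⟩ := hM.exists_perm_adj
  have hσ₀_ne : ∀ i, Halpha X α (σ₀ i) i ≠ 0 := fun i =>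
    (Halpha_ne_zero_iff X hα0).mpr (M.adj_sub (hσ₀ i)).symm
  have hunique : ∀ σ : Perm V, (∀ i, Halpha X α (σ i) i ≠ 0) → σ = σ₀ := fun σ hσ =>
    hM.perm_eq_of_unique c huniq (fun v => ((Halpha_ne_zero_iff X hα0).mp (hσ v)).symm)
      (fun v => M.adj_sub (hσ₀ v))
  rw [Matrix.det_eq_of_forall_prod_ne_zero_imp_eq _ σ₀ hunique, Units.smul_def]
  exact smul_ne_zero (Units.ne_zero _) (Finset.prod_ne_zero_iff.mpr fun i _ => hσ₀_ne i)
end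

section
/- Let X be a bipartite mixed graph with a unique perfect matching and H_α its α-hermitian adjacency matrix. For distinct vertices i ≠ j, the (i,j)-entry of H_α⁻¹ equals the sum over all co-augmenting mixed paths P from i to j of (−1)^{(|E(P)|−1)/2} · h_α(P), where h_α(P) is the product of the H_α-entries along consecutive vertices of P; the diagonal entries of H_α⁻¹ are zero. -/
open SimpleGraph
open scoped Classical

/-!
Let `N` be the matrix of signed sums over co-augmenting paths; we show `H_α N = 1`. Fix a row `i`
and let `m` be the `M`-partner of `i`. A co-augmenting path from `m` is either the edge `mi`, or it
starts `m, i, j` with `ij ∉ M` and continues along a co-augmenting path from `j`. Conversely, every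
co-augmenting path `q` from a neighbour `j ≠ m` of `i` extends to `m, i, j, q`: if `q` met `i`, the
prefix of `q` up to `i` would be odd (`X` is bipartite), and closed up by `ij` it would be an
`M`-alternating cycle, whose symmetric difference with `M` is a second perfect matching; and since
`q` is covered by its own matching edges, it cannot meet `m` without meeting `i`. The extension
multiplies the weight by `-h_{mi} h_{ij}` and `h_{im} h_{mi} = 1`, so in row `i` the term of `m`
cancels all the others, up to the contribution `δ_{ik}` of the single edge `mi`.
-/

open SimpleGraph Walk
open scoped symmDiff

section CoAugmenting

variable {V : Type*} {G : SimpleGraph V} {Ms : Set (Sym2 V)}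

theorem not_isCoAugmenting_nil {u : V} : ¬ IsCoAugmenting G Ms (nil : G.Walk u u) := by
  simp [IsCoAugmenting]

theorem isCoAugmenting_cons_nil_iff {u v : V} (h : G.Adj u v) :
    IsCoAugmenting G Ms (cons h nil) ↔ s(u, v) ∈ Ms := by
  simp [IsCoAugmenting, h.ne]

theorem isCoAugmenting_cons_cons_iff {u v w x : V} (h : G.Adj u v) (h' : G.Adj v w)
    (q : G.Walk w x) :
    IsCoAugmenting G Ms (cons h (cons h' q)) ↔
      (cons h (cons h' q)).IsPath ∧ s(u, v) ∈ Ms ∧ s(v, w) ∉ Ms ∧ IsCoAugmenting G Ms q := by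
  simp only [IsCoAugmenting, edges_cons, List.length_cons, Fin.forall_fin_succ,
    List.get_eq_getElem, Fin.val_zero, Fin.val_succ, List.getElem_cons_zero,
    List.getElem_cons_succ, Nat.odd_add_one, Nat.even_add_one, Nat.not_even_iff_odd,
    Nat.not_odd_iff_even, Even.zero, Nat.not_odd_zero, iff_true, iff_false]
  have hq : (cons h (cons h' q)).IsPath → q.IsPath := fun hp => hp.of_cons.of_cons
  tauto

theorem IsCoAugmenting.odd_length {u v : V} {p : G.Walk u v} (hp : IsCoAugmenting G Ms p) :
    Odd p.length :=
  p.length_edges ▸ hp.2.1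

theorem IsCoAugmenting.cons_mem {u v w : V} {h : G.Adj u v} {p : G.Walk v w}
    (hp : IsCoAugmenting G Ms (cons h p)) : s(u, v) ∈ Ms := by
  cases p with
  | nil => exact (isCoAugmenting_cons_nil_iff h).mp hp
  | cons h' q => exact ((isCoAugmenting_cons_cons_iff h h' q).mp hp).2.1

theorem IsCoAugmenting.eq_cons_nil {u v : V} {p : G.Walk u v} (hp : IsCoAugmenting G Ms p)
    (h1 : p.length = 1) : ∃ h : G.Adj u v, s(u, v) ∈ Ms ∧ p = cons h nil := by
  cases p with
  | nil => simp at h1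
  | cons h q =>
    cases q with
    | nil => exact ⟨h, hp.cons_mem, rfl⟩
    | cons => simp at h1

theorem IsCoAugmenting.of_append_left {u v w : V} {p : G.Walk u v} {q : G.Walk v w}
    (hpq : IsCoAugmenting G Ms (p.append q)) (hp : Odd p.length) : IsCoAugmenting G Ms p := by
  obtain ⟨hpath, -, halt⟩ := hpq
  refine ⟨hpath.of_append_left, by rwa [length_edges], fun i => ?_⟩
  have hi : (i : ℕ) < (p.append q).edges.length := by
    simp only [edges_append, List.length_append]; omega
  have := halt ⟨i, hi⟩
  simp only [List.get_eq_getElem, edges_append] at this ⊢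
  rwa [List.getElem_append_left] at this

theorem IsCoAugmenting.exists_mem_edges : ∀ {u v : V} {p : G.Walk u v},
    IsCoAugmenting G Ms p → ∀ x ∈ p.support, ∃ y, s(x, y) ∈ Ms ∧ s(x, y) ∈ p.edges
  | _, _, nil, hp => (not_isCoAugmenting_nil hp).elim
  | _, _, cons h nil, hp => by
    have hm := (isCoAugmenting_cons_nil_iff h).mp hp
    intro x hx
    simp only [support_cons, support_nil, List.mem_cons, List.not_mem_nil, or_false] at hx
    rcases hx with rfl | rfl
    · exact ⟨_, hm, by simp⟩
    · exact ⟨_, Sym2.eq_swap ▸ hm, by simp [Sym2.eq_swap]⟩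
  | _, _, cons h (cons h' q), hp => by
    obtain ⟨-, hm, -, hq⟩ := (isCoAugmenting_cons_cons_iff h h' q).mp hp
    intro x hx
    rw [support_cons, support_cons, List.mem_cons, List.mem_cons] at hx
    rcases hx with rfl | rfl | hx
    · exact ⟨_, hm, by simp⟩
    · exact ⟨_, Sym2.eq_swap ▸ hm, by simp [Sym2.eq_swap]⟩
    · obtain ⟨y, hy, hye⟩ := hq.exists_mem_edges x hx
      exact ⟨y, hy, by simp [hye]⟩

theorem IsCoAugmenting.cons_isCycle {u v : V} {p : G.Walk v u} (h : G.Adj u v)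
    (hp : IsCoAugmenting G Ms p) (huv : s(u, v) ∉ Ms) : (cons h p).IsCycle := by
  refine (cons_isCycle_iff p h).mpr ⟨hp.1, fun he => ?_⟩
  cases p with
  | nil => exact not_isCoAugmenting_nil hp
  | cons h' q =>
    rcases List.mem_cons.mp (edges_cons h' q ▸ he) with heq | hq
    · exact huv (heq ▸ hp.cons_mem)
    · exact ((cons_isPath_iff h' q).mp hp.1).2 (q.snd_mem_support_of_mem_edges hq)

theorem finite_setOf_isCoAugmenting [Finite V] (Ms : Set (Sym2 V)) (u v : V) :
    {p : G.Walk u v | IsCoAugmenting G Ms p}.Finite := by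
  have := Fintype.ofFinite V
  exact (Set.toFinite {p : G.Walk u v | p.length < Fintype.card V}).subset
    fun p hp => hp.1.length_lt

end CoAugmenting

section Matching

variable {V : Type*} {G : SimpleGraph V} {M : G.Subgraph}

/-- Otherwise `c` is `M`-alternating, and `M ∆ c` is a second perfect matching. -/
theorem SimpleGraph.Walk.IsCycle.not_forall_matched_within (hM : M.IsPerfectMatching)
    (huniq : ∀ N : G.Subgraph, N.IsPerfectMatching → N = M) {u : V} {c : G.Walk u u}
    (hc : c.IsCycle) : ¬ ∀ x ∈ c.support, ∃ y, M.Adj x y ∧ s(x, y) ∈ c.edges := by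
  intro hcover
  set C := c.toSubgraph.spanningCoe
  have hcyc : C.IsCycles := hc.isCycles_spanningCoe_toSubgraph
  have halt : C.IsAlternating M.spanningCoe := by
    intro x w w' hww' hxw hxw'
    obtain ⟨y, hxy, hyc⟩ := hcover x (mem_support_of_adj_toSubgraph hxw)
    have hCxy : C.Adj x y := adj_toSubgraph_iff_mem_edges.mpr hyc
    have hy : y = w ∨ y = w' := by
      by_contra! hne
      obtain ⟨z, -, hz⟩ := hcyc.existsUnique_ne_adj hxw
      exact hne.2 ((hz y ⟨hne.1.symm, hCxy⟩).trans (hz w' ⟨hww', hxw'⟩).symm)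
    simp only [Subgraph.spanningCoe_adj]
    rcases hy with rfl | rfl
    · exact iff_of_true hxy fun h => hww' (hM.1.eq_of_adj_left hxy h)
    · exact iff_of_false (fun h => hww' (hM.1.eq_of_adj_left h hxy)) (not_not.mpr hxy)
  have hle : M.spanningCoe ∆ C ≤ G := fun a b h => by
    rcases h with ⟨h, -⟩ | ⟨h, -⟩
    · exact h.adj_sub
    · exact h.adj_sub
  have hN : (SimpleGraph.toSubgraph (M.spanningCoe ∆ C) hle).IsPerfectMatching := by
    have := hM.symmDiff_of_isAlternating halt hcyc
    rw [Subgraph.isPerfectMatching_iff] at this ⊢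
    simpa using this
  obtain ⟨v, hv⟩ : ∃ v, C.Adj u v := ⟨_, c.toSubgraph_adj_snd hc.not_nil⟩
  have huv := congrFun₂ (Subgraph.ext_iff.mp (huniq _ hN)).2 u v
  simp only [SimpleGraph.toSubgraph, symmDiff_def, sup_adj, sdiff_adj,
    Subgraph.spanningCoe_adj, hv, eq_iff_iff] at huv
  tauto

theorem IsCoAugmenting.mem_support_of_adj (hM : M.IsMatching) {u v x y : V} {p : G.Walk u v}
    (hp : IsCoAugmenting G M.edgeSet p) (hxy : M.Adj x y) (hx : x ∈ p.support) :
    y ∈ p.support := by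
  obtain ⟨z, hz, hze⟩ := hp.exists_mem_edges x hx
  rw [hM.eq_of_adj_left (Subgraph.mem_edgeSet.mp hz) hxy] at hze
  exact p.snd_mem_support_of_mem_edges hze

theorem IsCoAugmenting.not_mem_support_of_adj (hM : M.IsPerfectMatching)
    (huniq : ∀ N : G.Subgraph, N.IsPerfectMatching → N = M) (hbip : G.Colorable 2)
    {i j k : V} {p : G.Walk j k} (hp : IsCoAugmenting G M.edgeSet p) (hij : G.Adj i j)
    (hnm : s(i, j) ∉ M.edgeSet) : i ∉ p.support := by
  intro hi
  set p₁ := p.takeUntil i hi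
  have hodd : Odd p₁.length := by
    have := two_colorable_iff_forall_loop_even.mp hbip i (cons hij p₁)
    rwa [length_cons, Nat.even_add_one, Nat.not_even_iff_odd] at this
  have h₁ : IsCoAugmenting G M.edgeSet p₁ := by
    rw [← p.take_spec hi] at hp
    exact hp.of_append_left hodd
  refine (h₁.cons_isCycle hij hnm).not_forall_matched_within hM huniq fun x hx => ?_
  have hx₁ : x ∈ p₁.support := by
    rcases List.mem_cons.mp (support_cons hij p₁ ▸ hx) with rfl | hx
    · exact p₁.end_mem_support
    · exact hx
  obtain ⟨y, hy, hye⟩ := h₁.exists_mem_edges x hx₁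
  exact ⟨y, hy, by simp [hye]⟩

theorem IsCoAugmenting.cons_cons (hM : M.IsPerfectMatching)
    (huniq : ∀ N : G.Subgraph, N.IsPerfectMatching → N = M) (hbip : G.Colorable 2)
    {m i j k : V} {q : G.Walk j k} (hq : IsCoAugmenting G M.edgeSet q) (hmi : M.Adj m i)
    (hij : G.Adj i j) (hnm : s(i, j) ∉ M.edgeSet) :
    IsCoAugmenting G M.edgeSet (cons (M.adj_sub hmi) (cons hij q)) := by
  have hi := hq.not_mem_support_of_adj hM huniq hbip hij hnm
  have hm : m ∉ (cons hij q).support := by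
    rw [support_cons, List.mem_cons, not_or]
    exact ⟨(M.adj_sub hmi).ne, fun hm => hi (hq.mem_support_of_adj hM.1 hmi hm)⟩
  rw [isCoAugmenting_cons_cons_iff]
  exact ⟨(cons_isPath_iff _ _).mpr ⟨(cons_isPath_iff _ _).mpr ⟨hq.1, hi⟩, hm⟩, hmi, hnm, hq⟩

theorem IsCoAugmenting.eq_cons_cons (hM : M.IsMatching) {m i k : V} (hmi : M.Adj m i)
    {p : G.Walk m k} (hp : IsCoAugmenting G M.edgeSet p) (hlen : p.length ≠ 1) :
    ∃ j, ∃ (hij : G.Adj i j) (q : G.Walk j k),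
      j ≠ m ∧ IsCoAugmenting G M.edgeSet q ∧ p = cons (M.adj_sub hmi) (cons hij q) := by
  cases p with
  | nil => exact (not_isCoAugmenting_nil hp).elim
  | cons h p =>
    cases p with
    | nil => exact (hlen rfl).elim
    | @cons _ j _ h' q =>
      obtain ⟨-, hs, hs', hq⟩ := (isCoAugmenting_cons_cons_iff h h' q).mp hp
      obtain rfl := hM.eq_of_adj_left (Subgraph.mem_edgeSet.mp hs) hmi
      refine ⟨j, h', q, fun hj => hs' ?_, hq, rfl⟩
      rw [hj]
      exact Subgraph.mem_edgeSet.mpr hmi.symm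

end Matching

section Halpha

variable {V : Type*} {X : MixedGraph V} {α : ℂ}

theorem Halpha_apply_of_not_adj {u v : V} (h : ¬ X.underlying.Adj u v) : Halpha X α u v = 0 := by
  simp only [MixedGraph.underlying, not_or] at h
  simp [Halpha, h.1, h.2.1, h.2.2]

theorem adj_of_Halpha_apply_ne_zero {u v : V} (h : Halpha X α u v ≠ 0) : X.underlying.Adj u v :=
  not_imp_comm.mp Halpha_apply_of_not_adj h

theorem Halpha_mul_Halpha_swap (hα : ‖α‖ = 1) {u v : V} (h : X.underlying.Adj u v) :
    Halpha X α u v * Halpha X α v u = 1 := by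
  have hconj : α * (starRingEnd ℂ) α = 1 := by
    rw [Complex.mul_conj, Complex.normSq_eq_norm_sq, hα]
    norm_num
  rcases h with hd | ha | ha
  · simp [Halpha, hd, X.digon_symm u v hd]
  · have h₁ : ¬ X.digon u v := fun h => (X.digon_arc u v h).1 ha
    have h₂ : ¬ X.digon v u := fun h => (X.digon_arc v u h).2 ha
    simp [Halpha, h₁, h₂, ha, X.arc_asymm u v ha, hconj]
  · have h₁ : ¬ X.digon u v := fun h => (X.digon_arc u v h).2 ha
    have h₂ : ¬ X.digon v u := fun h => (X.digon_arc v u h).1 ha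
    simp [Halpha, h₁, h₂, ha, X.arc_asymm v u ha, mul_comm, hconj]

theorem hWalk_nil {u : V} : hWalk X α (nil : X.underlying.Walk u u) = 1 := by
  simp [hWalk]

theorem hWalk_cons {u v w : V} (h : X.underlying.Adj u v) (p : X.underlying.Walk v w) :
    hWalk X α (cons h p) = Halpha X α u v * hWalk X α p := by
  simp [hWalk]

end Halpha

section Inverse

variable {V : Type*} (X : MixedGraph V) (α : ℂ)

noncomputable def coAugWeight {u v : V} (p : X.underlying.Walk u v) : ℂ :=
  (-1 : ℂ) ^ ((p.length - 1) / 2) * hWalk X α p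

noncomputable def coAugMatrix (Ms : Set (Sym2 V)) : Matrix V V ℂ :=
  Matrix.of fun u v => ∑ᶠ p ∈ {p : X.underlying.Walk u v | IsCoAugmenting X.underlying Ms p},
    coAugWeight X α p

noncomputable def coAugPaths [Finite V] (Ms : Set (Sym2 V)) (u v : V) :
    Finset (X.underlying.Walk u v) :=
  (finite_setOf_isCoAugmenting Ms u v).toFinset

variable {X α}

theorem coAugWeight_cons_nil {u v : V} (h : X.underlying.Adj u v) :
    coAugWeight X α (cons h nil) = Halpha X α u v := by
  simp [coAugWeight, hWalk_cons, hWalk_nil]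

theorem coAugWeight_cons_cons {u v w x : V} (h : X.underlying.Adj u v)
    (h' : X.underlying.Adj v w) {q : X.underlying.Walk w x} (hq : Odd q.length) :
    coAugWeight X α (cons h (cons h' q)) =
      -(Halpha X α u v * Halpha X α v w * coAugWeight X α q) := by
  obtain ⟨n, hn⟩ := hq
  have : (q.length + 2 - 1) / 2 = (q.length - 1) / 2 + 1 := by omega
  simp only [coAugWeight, length_cons, hWalk_cons, add_assoc, one_add_one_eq_two, this, pow_succ]
  ring

section Finite

variable [Finite V]

@[simp] theorem mem_coAugPaths {Ms : Set (Sym2 V)} {u v : V} {p : X.underlying.Walk u v} :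
    p ∈ coAugPaths X Ms u v ↔ IsCoAugmenting X.underlying Ms p :=
  Set.Finite.mem_toFinset _

theorem coAugMatrix_apply (Ms : Set (Sym2 V)) (u v : V) :
    coAugMatrix X α Ms u v = ∑ p ∈ coAugPaths X Ms u v, coAugWeight X α p :=
  finsum_mem_eq_finite_toFinset_sum _ _

theorem coAugMatrix_apply_self (Ms : Set (Sym2 V)) (i : V) : coAugMatrix X α Ms i i = 0 := by
  refine coAugMatrix_apply Ms i i ▸ Finset.sum_eq_zero fun p hp => ?_
  have hp := mem_coAugPaths.mp hp
  exact absurd (isPath_iff_nil.mp hp.1).eq_nil (by rintro rfl; exact not_isCoAugmenting_nil hp)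

theorem sum_coAugPaths_length_eq_one {M : X.underlying.Subgraph} (hM : M.IsMatching) {m i : V}
    (hmi : M.Adj m i) (k : V) :
    ∑ p ∈ coAugPaths X M.edgeSet m k with p.length = 1, coAugWeight X α p =
      if k = i then Halpha X α m i else 0 := by
  have hend : ∀ p ∈ (coAugPaths X M.edgeSet m k).filter (·.length = 1),
      ∃ h : X.underlying.Adj m k, k = i ∧ p = cons h nil := by
    intro p hp
    rw [Finset.mem_filter, mem_coAugPaths] at hp
    obtain ⟨h, hs, rfl⟩ := hp.1.eq_cons_nil hp.2
    exact ⟨h, hM.eq_of_adj_left (Subgraph.mem_edgeSet.mp hs) hmi, rfl⟩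
  split_ifs with hk
  · subst hk
    have hsingle :
        cons (M.adj_sub hmi) nil ∈ (coAugPaths X M.edgeSet m k).filter (·.length = 1) := by
      simp [Finset.mem_filter, isCoAugmenting_cons_nil_iff, Subgraph.mem_edgeSet.mpr hmi]
    rw [Finset.sum_eq_single_of_mem _ hsingle, coAugWeight_cons_nil]
    intro p hp hne
    obtain ⟨h, -, rfl⟩ := hend p hp
    exact absurd rfl hne
  · exact Finset.sum_eq_zero fun p hp => absurd (hend p hp).choose_spec.1 hk

end Finite

variable [Fintype V] [DecidableEq V] {M : X.underlying.Subgraph}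

theorem sum_coAugPaths_length_ne_one (hM : M.IsPerfectMatching)
    (huniq : ∀ N : X.underlying.Subgraph, N.IsPerfectMatching → N = M)
    (hbip : X.underlying.Colorable 2) {m i : V} (hmi : M.Adj m i) (k : V) :
    ∑ p ∈ coAugPaths X M.edgeSet m k with p.length ≠ 1, coAugWeight X α p =
      -(Halpha X α m i *
        ∑ j ∈ Finset.univ.erase m, Halpha X α i j * coAugMatrix X α M.edgeSet j k) := by
  have hnm : ∀ {j}, j ≠ m → s(i, j) ∉ M.edgeSet := fun hj hs =>
    hj (hM.1.eq_of_adj_left (Subgraph.mem_edgeSet.mp hs) hmi.symm)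
  have hadj : ∀ x : Σ j, X.underlying.Walk j k,
      -(Halpha X α m i * Halpha X α i x.1 * coAugWeight X α x.2) ≠ 0 → X.underlying.Adj i x.1 :=
    fun x hx => adj_of_Halpha_apply_ne_zero fun h0 => hx (by rw [h0]; ring)
  simp only [coAugMatrix_apply, Finset.mul_sum, ← Finset.sum_neg_distrib, ← mul_assoc]
  rw [Finset.sum_sigma' (Finset.univ.erase m) (fun j => coAugPaths X M.edgeSet j k)
    (fun j q => -(Halpha X α m i * Halpha X α i j * coAugWeight X α q))]
  symm
  refine Finset.sum_bij_ne_zero (fun x _ hx => cons (M.adj_sub hmi) (cons (hadj x hx) x.2))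
    ?_ ?_ ?_ ?_
  · rintro ⟨j, q⟩ hx -
    simp only [Finset.mem_sigma, Finset.mem_erase, mem_coAugPaths] at hx
    simp only [Finset.mem_filter, mem_coAugPaths, length_cons]
    exact ⟨hx.2.cons_cons hM huniq hbip hmi _ (hnm hx.1.1), by omega⟩
  · rintro ⟨j₁, q₁⟩ _ _ ⟨j₂, q₂⟩ _ _ he
    simp only [cons.injEq, heq_eq_eq, true_and] at he
    exact Sigma.ext he.1 he.2
  · intro p hp hw
    obtain ⟨hp, hlen⟩ := Finset.mem_filter.mp hp
    obtain ⟨j, hij, q, hj, hq, rfl⟩ := (mem_coAugPaths.mp hp).eq_cons_cons hM.1 hmi hlen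
    rw [coAugWeight_cons_cons _ hij hq.odd_length] at hw
    exact ⟨⟨j, q⟩, by simp [hj, hq], hw, rfl⟩
  · rintro ⟨j, q⟩ hx -
    simp only [Finset.mem_sigma, mem_coAugPaths] at hx
    exact (coAugWeight_cons_cons _ _ hx.2.odd_length).symm

theorem Halpha_mul_coAugMatrix (hα : ‖α‖ = 1) (hM : M.IsPerfectMatching)
    (huniq : ∀ N : X.underlying.Subgraph, N.IsPerfectMatching → N = M)
    (hbip : X.underlying.Colorable 2) : Halpha X α * coAugMatrix X α M.edgeSet = 1 := by
  ext i k
  obtain ⟨m, hm, -⟩ := hM.1 (hM.2 i)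
  have hinv := Halpha_mul_Halpha_swap hα (M.adj_sub hm)
  rw [Matrix.mul_apply, Matrix.one_apply, ← Finset.add_sum_erase _ _ (Finset.mem_univ m),
    coAugMatrix_apply M.edgeSet m k,
    ← Finset.sum_filter_add_sum_filter_not _ (fun p => p.length = 1),
    sum_coAugPaths_length_eq_one hM.1 hm.symm, sum_coAugPaths_length_ne_one hM huniq hbip hm.symm]
  set S := ∑ j ∈ Finset.univ.erase m, Halpha X α i j * coAugMatrix X α M.edgeSet j k
  rcases eq_or_ne i k with rfl | hik
  · rw [if_pos rfl, if_pos rfl]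
    linear_combination (1 - S) * hinv
  · rw [if_neg hik, if_neg hik.symm]
    linear_combination (-S) * hinv

end Inverse

/-- Entry formula for the inverse of the α-hermitian adjacency matrix of a bipartite
mixed graph with a unique perfect matching: a sum over co-augmenting paths. -/
theorem stmt8 {V : Type*} [Fintype V] [DecidableEq V]
    (X : MixedGraph V) (α : ℂ) (hα : ‖α‖ = 1)
    (hbip : X.underlying.Colorable 2)
    (M : X.underlying.Subgraph) (hM : M.IsPerfectMatching)
    (huniq : ∀ N : X.underlying.Subgraph, N.IsPerfectMatching → N = M) :
    (∀ i j : V, i ≠ j →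
      (Halpha X α)⁻¹ i j =
        ∑ᶠ p ∈ {p : X.underlying.Walk i j | IsCoAugmenting X.underlying M.edgeSet p},
          (-1 : ℂ) ^ ((p.length - 1) / 2) * hWalk X α p) ∧
    (∀ i : V, (Halpha X α)⁻¹ i i = 0) := by
  have hinv : (Halpha X α)⁻¹ = coAugMatrix X α M.edgeSet :=
    Matrix.inv_eq_right_inv (Halpha_mul_coAugMatrix hα hM huniq hbip)
  exact ⟨fun i j _ => by rw [hinv]; rfl, fun i => by rw [hinv, coAugMatrix_apply_self]⟩
end

section
/- Let G be a bipartite graph with unique perfect matching M such that every cycle of G has an even number of non-matching edges. Fix a base vertex u and define w : V(G) → {1, −1} by w(v) = f_W(v) for any path W from u to v (well-defined by the hypothesis), and let D_u be the diagonal {±1}-matrix with entries w(v). Then D_u · A(G) · D_u = H_{−1}(X_G), where A(G) is the adjacency matrix of G and H_{−1}(X_G) is the (−1)-hermitian adjacency matrix of the mixed graph X_G obtained by orienting all non-matching edges of G. -/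
open SimpleGraph
open scoped Classical

/-!
Write `f_W = ∏ ε(e)` over the edges `e` of `W`, where `ε(e) = 1` on matching edges and `−1`
otherwise. Let `xy` be an edge and `P` a path from `u` to `x`. If `y ∉ P`, then `P` followed by
`xy` is a path to `y`, so `w(y) = w(x) ε(xy)`. Otherwise `P` splits at `y` into a path to `y` and
a path `Q` from `y` to `x`; either `Q` is the edge `yx` itself, or `Q` closes with `xy` to a
cycle, whose evenness hypothesis gives `f_Q = ε(xy)`. In both cases `w(x) w(y) = ε(xy)`, which
is exactly the entry of `H_{−1}` at an edge.
-/

namespace SimpleGraph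

variable {V : Type*} {G : SimpleGraph V} (S : Set (Sym2 V))

noncomputable def edgeSign (e : Sym2 V) : ℤ := if e ∈ S then 1 else -1

theorem edgeSign_mul_self (e : Sym2 V) : edgeSign S e * edgeSign S e = 1 := by
  unfold edgeSign; split_ifs <;> norm_num

namespace Walk

theorem fEnd_cons {u v x : V} (h : G.Adj u v) (p : G.Walk v x) :
    fEnd G S (cons h p) = edgeSign S s(u, v) * fEnd G S p := by
  simp only [fEnd, edgeSign]
  split_ifs <;> simp

theorem fEnd_eq_neg_one_pow {u v : V} (p : G.Walk u v) :
    fEnd G S p = (-1) ^ (p.edges.filter (· ∉ S)).length := by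
  induction p with
  | nil => rfl
  | @cons a b _ h p ih =>
    rw [fEnd_cons, ih, edges_cons, List.filter_cons]
    by_cases he : s(a, b) ∈ S <;> simp [edgeSign, he, pow_succ, mul_comm]

theorem fEnd_append {u v x : V} (p : G.Walk u v) (q : G.Walk v x) :
    fEnd G S (p.append q) = fEnd G S p * fEnd G S q := by
  simp only [fEnd_eq_neg_one_pow, edges_append, List.filter_append, List.length_append, pow_add]

theorem fEnd_concat {u v x : V} (p : G.Walk u v) (h : G.Adj v x) :
    fEnd G S (p.concat h) = fEnd G S p * edgeSign S s(v, x) := by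
  rw [concat_eq_append, fEnd_append, fEnd_cons]
  simp [fEnd]

theorem fEnd_mul_self {u v : V} (p : G.Walk u v) : fEnd G S p * fEnd G S p = 1 := by
  rw [fEnd_eq_neg_one_pow, ← mul_pow]
  norm_num

theorem fEnd_eq_neg_one_pow_ncard {u v : V} (p : G.Walk u v) (hp : p.edges.Nodup) :
    fEnd G S p = (-1) ^ {e | e ∈ p.edges ∧ e ∉ S}.ncard := by
  have hset : {e | e ∈ p.edges ∧ e ∉ S} = ↑(p.edges.filter (· ∉ S)).toFinset := by
    ext e
    simp
  rw [fEnd_eq_neg_one_pow, hset, Set.ncard_coe_finset,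
    List.toFinset_card_of_nodup (hp.filter _)]

variable {S}

theorem fEnd_eq_edgeSign_of_isPath
    (heven : ∀ (z : V) (c : G.Walk z z), c.IsCycle → Even {e | e ∈ c.edges ∧ e ∉ S}.ncard)
    {x y : V} (hxy : G.Adj x y) {q : G.Walk y x} (hq : q.IsPath) :
    fEnd G S q = edgeSign S s(x, y) := by
  by_cases he : s(y, x) ∈ q.edges
  · rw [hq.eq_adj_toWalk_of_mem_edges he, Adj.toWalk, fEnd_cons, Sym2.eq_swap]
    simp [fEnd]
  · have hc : (cons hxy q).IsCycle := (cons_isCycle_iff q hxy).mpr ⟨hq, Sym2.eq_swap ▸ he⟩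
    have hone : edgeSign S s(x, y) * fEnd G S q = 1 := by
      rw [← fEnd_cons S hxy, fEnd_eq_neg_one_pow_ncard S _ hc.edges_nodup]
      exact (heven x _ hc).neg_one_pow
    calc fEnd G S q = edgeSign S s(x, y) * (edgeSign S s(x, y) * fEnd G S q) := by
          rw [← mul_assoc, edgeSign_mul_self, one_mul]
      _ = edgeSign S s(x, y) := by rw [hone, mul_one]

end Walk

theorem mul_eq_edgeSign_of_adj
    (heven : ∀ (z : V) (c : G.Walk z z), c.IsCycle → Even {e | e ∈ c.edges ∧ e ∉ S}.ncard)
    {u : V} {w : V → ℤ} (hw : ∀ (v : V) (p : G.Walk u v), p.IsPath → w v = fEnd G S p)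
    {x y : V} (hux : G.Reachable u x) (hxy : G.Adj x y) :
    w x * w y = edgeSign S s(x, y) := by
  obtain ⟨p, hp⟩ : ∃ p : G.Walk u x, p.IsPath := ⟨_, hux.some.bypass_isPath⟩
  by_cases hy : y ∈ p.support
  · have hwx : w x = w y * edgeSign S s(x, y) := by
      rw [hw x p hp, ← p.take_spec hy, Walk.fEnd_append, hw y _ (hp.takeUntil hy),
        Walk.fEnd_eq_edgeSign_of_isPath heven hxy (hp.dropUntil hy)]
    rw [hwx, mul_right_comm, hw y _ (hp.takeUntil hy), Walk.fEnd_mul_self, one_mul]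
  · rw [hw x p hp, hw y _ (hp.concat hy hxy), Walk.fEnd_concat, ← mul_assoc,
      Walk.fEnd_mul_self, one_mul]

end SimpleGraph

theorem Halpha_neg_one_apply {V : Type*} (X : MixedGraph V) (x y : V) :
    Halpha X (-1) x y = if X.digon x y then 1 else if X.underlying.Adj x y then -1 else 0 := by
  have hadj : X.underlying.Adj x y ↔ X.digon x y ∨ X.arc x y ∨ X.arc y x := Iff.rfl
  by_cases hd : X.digon x y <;> by_cases ha : X.arc x y <;> by_cases ha' : X.arc y x <;>
    simp [Halpha, hadj, hd, ha, ha']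

theorem stmt11_general {V : Type*}
    (X : MixedGraph V) [DecidableRel X.underlying.Adj]
    (hconn : X.underlying.Connected)
    (M : X.underlying.Subgraph)
    (hdig : ∀ u v, X.digon u v ↔ M.Adj u v)
    (heven : ∀ (x : V) (c : X.underlying.Walk x x), c.IsCycle →
      Even (Set.ncard {e | e ∈ c.edges ∧ e ∉ M.edgeSet}))
    (u : V) (w : V → ℤ)
    (hw : ∀ (v : V) (p : X.underlying.Walk u v), p.IsPath →
      w v = fEnd X.underlying M.edgeSet p) :
    ∀ x y : V, (w x : ℂ) * (X.underlying.adjMatrix ℂ) x y * (w y : ℂ) =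
      Halpha X (-1) x y := by
  intro x y
  rw [Halpha_neg_one_apply, adjMatrix_apply, hdig]
  by_cases hxy : X.underlying.Adj x y
  · have hsign := mul_eq_edgeSign_of_adj M.edgeSet heven hw (hconn u x) hxy
    rw [edgeSign, Subgraph.mem_edgeSet] at hsign
    have hsignℂ : (w x : ℂ) * w y = if M.Adj x y then 1 else -1 := by exact_mod_cast hsign
    split_ifs at hsignℂ ⊢ <;> linear_combination hsignℂ
  · have hM : ¬ M.Adj x y := fun h => hxy (M.adj_sub h)
    simp [hxy, hM]

/-- If every cycle of `G` has an even number of non-matching edges, then the ±1 diagonal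
matrix `D_u` built from `f` conjugates the adjacency matrix of `G` to the (−1)-hermitian
adjacency matrix of the mixed graph `X_G` (digons exactly the matching edges). -/
theorem stmt11 {V : Type*} [Fintype V] [DecidableEq V]
    (X : MixedGraph V) [DecidableRel X.underlying.Adj]
    (hconn : X.underlying.Connected) (hbip : X.underlying.Colorable 2)
    (M : X.underlying.Subgraph) (hM : M.IsPerfectMatching)
    (huniq : ∀ N : X.underlying.Subgraph, N.IsPerfectMatching → N = M)
    (hdig : ∀ u v, X.digon u v ↔ M.Adj u v)
    (heven : ∀ (x : V) (c : X.underlying.Walk x x), c.IsCycle →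
      Even (Set.ncard {e | e ∈ c.edges ∧ e ∉ M.edgeSet}))
    (u : V) (w : V → ℤ) (hw1 : ∀ v, w v = 1 ∨ w v = -1)
    (hw : ∀ (v : V) (p : X.underlying.Walk u v), p.IsPath →
      w v = fEnd X.underlying M.edgeSet p) :
    ∀ x y : V, (w x : ℂ) * (X.underlying.adjMatrix ℂ) x y * (w y : ℂ) =
      Halpha X (-1) x y :=
  stmt11_general X hconn M hdig heven u w hw
end

section
/- Let X be a unicyclic bipartite graph with a unique perfect matching M. Then X has at least two pegs, where a peg is a matching edge incident to a vertex of the unique cycle of X but not an edge of the cycle. -/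
/-!
If there were at most one peg, every vertex of the cycle `C` would be matched along `C`: the
cycle has even length because `G` is bipartite, the vertices matched along `C` come in pairs,
and two vertices matched off `C` would give two different pegs, since a matching edge between
two vertices of `C` would be a chord, which a unicyclic graph does not have. Then `C` is
`M`-alternating, and `M ∆ C` is a second perfect matching.
-/
open SimpleGraph
open scoped Classical

open scoped symmDiff

namespace SimpleGraph

variable {V : Type*} {G : SimpleGraph V}

lemma Walk.IsCycle.card_support_toFinset {u : V} {c : G.Walk u u} (hc : c.IsCycle) :
    c.support.toFinset.card = c.length := by
  rw [← c.cons_tail_support, List.toFinset_cons,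
    Finset.insert_eq_of_mem (List.mem_toFinset.mpr (c.end_mem_tail_support hc.not_nil)),
    List.toFinset_card_of_nodup hc.support_nodup, List.length_tail, length_support,
    Nat.add_sub_cancel]

lemma Subgraph.IsMatching.even_card_of_forall_exists_adj {M : G.Subgraph} (hM : M.IsMatching)
    {s : Finset V} (hs : ∀ v ∈ s, ∃ w ∈ s, M.Adj v w) : Even s.card := by
  have hK : (M.induce s).IsMatching := by
    intro v hv
    obtain ⟨w, hw, hvw⟩ := hs v hv
    exact ⟨w, ⟨hv, hw, hvw⟩, fun y hy => hM.eq_of_adj_left hy.2.2 hvw⟩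
  have : Fintype (M.induce s).verts := inferInstanceAs (Fintype (s : Set V))
  simpa using hK.even_card

lemma IsCycles.isAlternating {H : SimpleGraph V} (hH : H.IsCycles) {M : G.Subgraph}
    (hM : M.IsMatching) (hmatched : ∀ v w, H.Adj v w → ∃ p, M.Adj v p ∧ H.Adj v p) :
    H.IsAlternating M.spanningCoe := by
  intro v w w' hne hw hw'
  obtain ⟨p, hp, hHp⟩ := hmatched v w hw
  have hpw : p = w ∨ p = w' := by
    obtain ⟨x, y, -, hxy⟩ := Set.ncard_eq_two.mp (hH ⟨w, hw⟩)
    simp only [Set.ext_iff, mem_neighborSet, Set.mem_insert_iff, Set.mem_singleton_iff] at hxy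
    grind
  simp only [Subgraph.spanningCoe_adj]
  refine ⟨fun hvw hvw' => hne (hM.eq_of_adj_left hvw hvw'), fun hvw' => ?_⟩
  rcases hpw with rfl | rfl
  · exact hp
  · exact absurd hp hvw'

lemma Subgraph.IsPerfectMatching.exists_ne_of_isAlternating {M : G.Subgraph}
    (hM : M.IsPerfectMatching) {H : SimpleGraph V} (hHG : H ≤ G)
    (halt : H.IsAlternating M.spanningCoe) (hH : H.IsCycles) {v w : V} (hvw : H.Adj v w) :
    ∃ N : G.Subgraph, N.IsPerfectMatching ∧ N ≠ M := by
  have hle : M.spanningCoe ∆ H ≤ G := by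
    rw [symmDiff_def]
    exact sup_le (sdiff_le.trans M.spanningCoe_le) (sdiff_le.trans hHG)
  have hN := hM.symmDiff_of_isAlternating halt hH
  refine ⟨(⊤ : Subgraph (M.spanningCoe ∆ H)).map (Hom.ofLE hle),
    ⟨hN.1.map_ofLE hle, fun x => by simp⟩, fun hNM => ?_⟩
  have hadj := congrArg (fun N : G.Subgraph => N.Adj v w) hNM
  simp only [Subgraph.map_adj, Hom.coe_ofLE, Relation.map_id_id, Subgraph.top_adj,
    eq_iff_iff] at hadj
  simp only [symmDiff_def, SimpleGraph.sup_adj, SimpleGraph.sdiff_adj,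
    Subgraph.spanningCoe_adj] at hadj
  tauto

lemma Subgraph.IsPerfectMatching.exists_ne_of_forall_adj_mem_edges {M : G.Subgraph}
    (hM : M.IsPerfectMatching) {u : V} {c : G.Walk u u} (hc : c.IsCycle)
    (hmatched : ∀ v ∈ c.support, ∃ w, M.Adj v w ∧ s(v, w) ∈ c.edges) :
    ∃ N : G.Subgraph, N.IsPerfectMatching ∧ N ≠ M := by
  have hadj {x y : V} : c.toSubgraph.spanningCoe.Adj x y ↔ s(x, y) ∈ c.edges :=
    Walk.adj_toSubgraph_iff_mem_edges
  have hcyc := hc.isCycles_spanningCoe_toSubgraph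
  have halt : c.toSubgraph.spanningCoe.IsAlternating M.spanningCoe :=
    hcyc.isAlternating hM.1 fun v w hvw => by
      obtain ⟨p, hp, hpc⟩ := hmatched v (c.fst_mem_support_of_mem_edges (hadj.mp hvw))
      exact ⟨p, hp, hadj.mpr hpc⟩
  obtain ⟨w, -, huw⟩ := hmatched u c.start_mem_support
  exact hM.exists_ne_of_isAlternating (Subgraph.spanningCoe_le _) halt hcyc (hadj.mpr huw)

end SimpleGraph

namespace IsUnicyclic

variable {V : Type*} {G : SimpleGraph V}

theorem mem_edges_of_adj (hunic : IsUnicyclic G) {u : V} {c : G.Walk u u} (hc : c.IsCycle)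
    {v w : V} (hv : v ∈ c.support) (hw : w ∈ c.support) (hadj : G.Adj v w) :
    s(v, w) ∈ c.edges := by
  by_contra hvw
  have hreach : (G.deleteEdges {s(v, w)}).Reachable v w := by
    refine reachable_deleteEdges_iff_exists_walk.mpr
      ⟨(c.takeUntil v hv).reverse.append (c.takeUntil w hw), fun he => hvw ?_⟩
    rw [Walk.edges_append, Walk.edges_reverse, List.mem_append, List.mem_reverse] at he
    exact he.elim (fun h => c.edges_takeUntil_subset_edges hv h)
      (fun h => c.edges_takeUntil_subset_edges hw h)
  obtain ⟨x, d, hd, hvwd⟩ :=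
    adj_and_reachable_delete_edges_iff_exists_cycle.mp ⟨hadj, hreach⟩
  exact hvw (Set.ext_iff.mp (hunic.2.2 x u d c hd hc) _ |>.mp hvwd)

theorem forall_exists_adj_mem_edges_of_isPeg_eq (hunic : IsUnicyclic G) (hbip : G.Colorable 2)
    {M : G.Subgraph} (hM : M.IsPerfectMatching)
    {u : V} {c : G.Walk u u} (hc : c.IsCycle)
    (hpeg : ∀ e f, IsPeg G M c e → IsPeg G M c f → e = f) :
    ∀ v ∈ c.support, ∃ w, M.Adj v w ∧ s(v, w) ∈ c.edges := by
  set S := c.support.toFinset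
  let matchedAlong (v : V) : Prop := ∃ w, M.Adj v w ∧ s(v, w) ∈ c.edges
  have hS : Even S.card :=
    hc.card_support_toFinset ▸ two_colorable_iff_forall_loop_even.mp hbip u c
  have hI : Even (S.filter matchedAlong).card :=
    hM.1.even_card_of_forall_exists_adj fun v hv => by
      obtain ⟨w, hvw, he⟩ := (Finset.mem_filter.mp hv).2
      refine ⟨w, Finset.mem_filter.mpr ⟨?_, v, M.adj_symm hvw, Sym2.eq_swap ▸ he⟩, hvw⟩
      exact List.mem_toFinset.mpr (c.snd_mem_support_of_mem_edges he)
  have hX : (S.filter (¬ matchedAlong ·)).card ≤ 1 := by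
    refine Finset.card_le_one.mpr fun v₁ h₁ v₂ h₂ => ?_
    simp only [S, matchedAlong, Finset.mem_filter, List.mem_toFinset, not_exists,
      not_and] at h₁ h₂
    obtain ⟨w₁, hw₁, -⟩ := hM.1 (hM.2 v₁)
    obtain ⟨w₂, hw₂, -⟩ := hM.1 (hM.2 v₂)
    have hpeg_eq := hpeg _ _ ⟨hw₁, h₁.2 w₁ hw₁, v₁, h₁.1, Sym2.mem_mk_left _ _⟩
      ⟨hw₂, h₂.2 w₂ hw₂, v₂, h₂.1, Sym2.mem_mk_left _ _⟩
    rcases Sym2.eq_iff.mp hpeg_eq with ⟨h, -⟩ | ⟨-, rfl⟩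
    · exact h
    · exact absurd (hunic.mem_edges_of_adj hc h₁.1 h₂.1 (M.adj_sub hw₁)) (h₁.2 _ hw₁)
  have hX0 : S.filter (¬ matchedAlong ·) = ∅ := by
    have hsplit := Finset.card_filter_add_card_filter_not (s := S) matchedAlong
    have hXeven : Even (S.filter (¬ matchedAlong ·)).card :=
      (Nat.even_add.mp (hsplit ▸ hS)).mp hI
    rw [← Finset.card_eq_zero]
    obtain ⟨k, hk⟩ := hXeven
    omega
  intro v hv
  simpa using Finset.filter_eq_empty_iff.mp hX0 (List.mem_toFinset.mpr hv)

end IsUnicyclic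

/-- A unicyclic bipartite graph with a unique perfect matching has at least two pegs. -/
theorem stmt12 {V : Type*} (G : SimpleGraph V) (hunic : IsUnicyclic G)
    (hbip : G.Colorable 2)
    (M : G.Subgraph) (hM : M.IsPerfectMatching)
    (huniq : ∀ N : G.Subgraph, N.IsPerfectMatching → N = M)
    {u : V} (c : G.Walk u u) (hc : c.IsCycle) :
    ∃ e f : Sym2 V, e ≠ f ∧ IsPeg G M c e ∧ IsPeg G M c f := by
  by_contra hpegs
  have hpeg_eq : ∀ e f, IsPeg G M c e → IsPeg G M c f → e = f := fun e f he hf =>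
    by_contra fun hne => hpegs ⟨e, f, hne, he, hf⟩
  obtain ⟨N, hN, hNM⟩ := hM.exists_ne_of_forall_adj_mem_edges hc
    (hunic.forall_exists_adj_mem_edges_of_isPeg_eq hbip hM hc hpeg_eq)
  exact hNM (huniq N hN)
end

section
/- Let X be a unicyclic bipartite graph with unique perfect matching M and exactly two pegs ρ1 and ρ2. If there are two distinct co-augmenting paths from a vertex u to a vertex v, then both ρ1 and ρ2 are edges of both of these paths. -/
open SimpleGraph
open scoped Classical

/-!
Let ρ be a peg at the cycle vertex b. Every edge of the cycle lies on p or on q: otherwise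
deleting it leaves an acyclic graph containing both p and q, which forces p = q. A co-augmenting
path meets each of its vertices through one of its matching edges, which at b can only be ρ;
since a path has at most two edges at a vertex, neither p nor q can contain both (unmatched)
cycle edges at b. So these two edges are split between p and q, both paths pass through b, and
hence both contain ρ.
-/

namespace SimpleGraph

variable {V : Type*} {G : SimpleGraph V}

theorem Subgraph.IsMatching.eq_of_mem_edgeSet {M : G.Subgraph} (hM : M.IsMatching) {a : V}
    {e f : Sym2 V} (he : e ∈ M.edgeSet) (hf : f ∈ M.edgeSet) (hae : a ∈ e) (haf : a ∈ f) :
    e = f := by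
  induction e using Sym2.ind with | _ b b' => ?_
  induction f using Sym2.ind with | _ c c' => ?_
  rw [Subgraph.mem_edgeSet] at he hf
  rcases Sym2.mem_iff.1 hae with rfl | rfl <;> rcases Sym2.mem_iff.1 haf with rfl | rfl
  · rw [hM.eq_of_adj_left he hf]
  · rw [hM.eq_of_adj_left he hf.symm, Sym2.eq_swap]
  · rw [hM.eq_of_adj_left he.symm hf, Sym2.eq_swap]
  · rw [hM.eq_of_adj_right he hf]

namespace Walk

variable {x y a : V} {e : Sym2 V}

theorem mem_support_of_mem_of_mem_edges {p : G.Walk x y} (he : e ∈ p.edges) (ha : a ∈ e) :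
    a ∈ p.support := by
  induction e using Sym2.ind with | _ b b' => ?_
  rcases Sym2.mem_iff.1 ha with rfl | rfl
  · exact p.fst_mem_support_of_mem_edges he
  · exact p.snd_mem_support_of_mem_edges he

theorem IsPath.eq_of_mem_edges_of_start_mem {p : G.Walk x y} (hp : p.IsPath) {e f : Sym2 V}
    (he : e ∈ p.edges) (hf : f ∈ p.edges) (hxe : x ∈ e) (hxf : x ∈ f) : e = f := by
  cases p with
  | nil => simp at he
  | cons h p =>
    rw [cons_isPath_iff] at hp
    have notin_tail : ∀ g ∈ p.edges, x ∉ g := fun g hg hxg =>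
      hp.2 (mem_support_of_mem_of_mem_edges hg hxg)
    simp only [edges_cons, List.mem_cons] at he hf
    grind

theorem IsPath.eq_or_eq_or_eq_of_mem_edges {p : G.Walk x y} (hp : p.IsPath) {e₁ e₂ e₃ : Sym2 V}
    (h₁ : e₁ ∈ p.edges) (h₂ : e₂ ∈ p.edges) (h₃ : e₃ ∈ p.edges)
    (ha₁ : a ∈ e₁) (ha₂ : a ∈ e₂) (ha₃ : a ∈ e₃) : e₁ = e₂ ∨ e₁ = e₃ ∨ e₂ = e₃ := by
  induction p with
  | nil => simp at h₁
  | @cons x v y h p ih =>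
    have hp' := (cons_isPath_iff h p).1 hp
    have at_head : ∀ f ∈ p.edges, a ∈ f → a ∈ s(x, v) → ∀ g ∈ p.edges, a ∈ g → f = g := by
      intro f hf haf hah g hg hag
      rcases Sym2.mem_iff.1 hah with rfl | rfl
      · exact absurd (mem_support_of_mem_of_mem_edges hf haf) hp'.2
      · exact hp'.1.eq_of_mem_edges_of_start_mem hf hg haf hag
    simp only [edges_cons, List.mem_cons] at h₁ h₂ h₃
    specialize ih hp'.1
    grind

theorem IsCycle.exists_ne_mem_edges {c : G.Walk a a} (hc : c.IsCycle) {b : V}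
    (hb : b ∈ c.support) : ∃ e₁ ∈ c.edges, ∃ e₂ ∈ c.edges, e₁ ≠ e₂ ∧ b ∈ e₁ ∧ b ∈ e₂ := by
  obtain ⟨w₁, w₂, hw, hnbr⟩ := Set.ncard_eq_two.1 (hc.ncard_neighborSet_toSubgraph_eq_two hb)
  have mem_edges : ∀ w ∈ c.toSubgraph.neighborSet b, s(b, w) ∈ c.edges := fun w hw =>
    (c.mem_edges_toSubgraph).1 hw
  refine ⟨s(b, w₁), mem_edges w₁ (by simp [hnbr]), s(b, w₂), mem_edges w₂ (by simp [hnbr]),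
    mt Sym2.congr_right.1 hw, by simp, by simp⟩

theorem exists_mem_edges_of_alternating {M : Set (Sym2 V)} :
    ∀ {x y : V} (p : G.Walk x y), Odd p.length →
      (∀ (i : ℕ) (hi : i < p.edges.length), p.edges[i] ∈ M ↔ Even i) →
      ∀ a ∈ p.support, ∃ e ∈ p.edges, e ∈ M ∧ a ∈ e
  | _, _, .nil, hodd, _, _, _ => absurd hodd (by simp)
  | _, _, .cons h .nil, _, halt, a, ha => by
    refine ⟨_, List.mem_cons_self, by simpa using halt 0 (by simp), ?_⟩
    simp only [support_cons, support_nil, List.mem_cons, List.not_mem_nil, or_false] at ha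
    rcases ha with rfl | rfl <;> simp
  | _, _, .cons h (.cons h' p), hodd, halt, a, ha => by
    have head_mem := by simpa using halt 0 (by simp)
    simp only [support_cons, List.mem_cons] at ha
    rcases ha with rfl | rfl | ha
    · exact ⟨_, List.mem_cons_self, head_mem, by simp⟩
    · exact ⟨_, List.mem_cons_self, head_mem, by simp⟩
    · obtain ⟨e, he, heM, hae⟩ := exists_mem_edges_of_alternating p
        (by simpa [length_cons, Nat.odd_add_one] using hodd)
        (fun i hi => by simpa [Nat.even_add_one] using halt (i + 2) (by simpa using hi)) a ha
      exact ⟨e, by simp [he], heM, hae⟩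

end Walk

end SimpleGraph

section

variable {V : Type*} {G : SimpleGraph V} {x y a : V}

theorem IsUnicyclic.isAcyclic_deleteEdges (hG : IsUnicyclic G) {c : G.Walk a a} (hc : c.IsCycle)
    {e : Sym2 V} (he : e ∈ c.edges) : (G.deleteEdges {e}).IsAcyclic := by
  intro b d hd
  have hsub : ∀ f ∈ d.edges, f ∈ G.edgeSet := fun f hf =>
    edgeSet_mono (G.deleteEdges_le {e}) (d.edges_subset_edgeSet hf)
  have he' : e ∈ (d.transfer G hsub).edges := by
    have := hG.2.2 _ _ _ _ (hd.transfer hsub) hc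
    exact (Set.ext_iff.1 this e).2 he
  rw [Walk.edges_transfer] at he'
  simpa using d.edges_subset_edgeSet he'

theorem IsUnicyclic.mem_edges_or_mem_edges (hG : IsUnicyclic G) {c : G.Walk a a}
    (hc : c.IsCycle) {p q : G.Walk x y} (hp : p.IsPath) (hq : q.IsPath) (hpq : p ≠ q)
    ⦃e : Sym2 V⦄ (he : e ∈ c.edges) : e ∈ p.edges ∨ e ∈ q.edges := by
  by_contra! hpqe
  have avoid : ∀ r : G.Walk x y, e ∉ r.edges → ∀ f ∈ r.edges, f ∈ (G.deleteEdges {e}).edgeSet :=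
    fun r hr f hf => by
      rw [edgeSet_deleteEdges]
      exact ⟨r.edges_subset_edgeSet hf, fun h => hr (Set.mem_singleton_iff.1 h ▸ hf)⟩
  have := (hG.isAcyclic_deleteEdges hc he).subsingleton_path x y |>.elim
    ⟨p.transfer _ (avoid p hpqe.1), hp.transfer _⟩ ⟨q.transfer _ (avoid q hpqe.2), hq.transfer _⟩
  exact hpq <| Walk.ext_support <| by
    simpa only [Walk.support_transfer] using congrArg (fun r => r.1.support) this

theorem IsCoAugmenting.exists_mem_edges_mem {M : Set (Sym2 V)} {p : G.Walk x y}
    (hp : IsCoAugmenting G M p) (ha : a ∈ p.support) : ∃ e ∈ p.edges, e ∈ M ∧ a ∈ e :=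
  p.exists_mem_edges_of_alternating (by simpa using hp.2.1)
    (fun i hi => by simpa using hp.2.2 ⟨i, hi⟩) a ha

theorem IsCoAugmenting.mem_or_mem {M : Set (Sym2 V)} {p : G.Walk x y}
    (hp : IsCoAugmenting G M p) {e₁ e₂ : Sym2 V} (h₁ : e₁ ∈ p.edges) (h₂ : e₂ ∈ p.edges)
    (hne : e₁ ≠ e₂) (ha₁ : a ∈ e₁) (ha₂ : a ∈ e₂) : e₁ ∈ M ∨ e₂ ∈ M := by
  obtain ⟨f, hf, hfM, haf⟩ := hp.exists_mem_edges_mem (Walk.mem_support_of_mem_of_mem_edges h₁ ha₁)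
  rcases hp.1.eq_or_eq_or_eq_of_mem_edges h₁ h₂ hf ha₁ ha₂ haf with h | rfl | rfl
  · exact absurd h hne
  · exact .inl hfM
  · exact .inr hfM

variable {M : G.Subgraph}

theorem IsCoAugmenting.mem_edges_of_mem_support (hM : M.IsMatching) {p : G.Walk x y}
    (hp : IsCoAugmenting G M.edgeSet p) {ρ : Sym2 V} (hρ : ρ ∈ M.edgeSet) (haρ : a ∈ ρ)
    (ha : a ∈ p.support) : ρ ∈ p.edges := by
  obtain ⟨e, he, heM, hae⟩ := hp.exists_mem_edges_mem ha
  rwa [← hM.eq_of_mem_edgeSet heM hρ hae haρ]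

theorem IsPeg.mem_edges_of_isCoAugmenting (hG : IsUnicyclic G) (hM : M.IsMatching)
    {c : G.Walk a a} (hc : c.IsCycle) {ρ : Sym2 V} (hρ : IsPeg G M c ρ) {p q : G.Walk x y}
    (hpq : p ≠ q) (hp : IsCoAugmenting G M.edgeSet p) (hq : IsCoAugmenting G M.edgeSet q) :
    ρ ∈ p.edges ∧ ρ ∈ q.edges := by
  obtain ⟨hρM, hρc, b, hbc, hbρ⟩ := hρ
  obtain ⟨e₁, he₁, e₂, he₂, hne, hb₁, hb₂⟩ := hc.exists_ne_mem_edges hbc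
  have unmatched : ∀ e ∈ c.edges, b ∈ e → e ∉ M.edgeSet := fun e he hbe heM =>
    hρc (hM.eq_of_mem_edgeSet heM hρM hbe hbρ ▸ he)
  have not_both : ∀ r : G.Walk x y, IsCoAugmenting G M.edgeSet r → e₁ ∈ r.edges →
      e₂ ∉ r.edges := fun r hr h₁ h₂ =>
    (hr.mem_or_mem h₁ h₂ hne hb₁ hb₂).elim
      (unmatched e₁ he₁ hb₁) (unmatched e₂ he₂ hb₂)
  have through : b ∈ p.support ∧ b ∈ q.support := by
    have cover := hG.mem_edges_or_mem_edges hc hp.1 hq.1 hpq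
    rcases cover he₁ with h₁ | h₁ <;> rcases cover he₂ with h₂ | h₂
    · exact absurd h₂ (not_both p hp h₁)
    · exact ⟨Walk.mem_support_of_mem_of_mem_edges h₁ hb₁,
        Walk.mem_support_of_mem_of_mem_edges h₂ hb₂⟩
    · exact ⟨Walk.mem_support_of_mem_of_mem_edges h₂ hb₂,
        Walk.mem_support_of_mem_of_mem_edges h₁ hb₁⟩
    · exact absurd h₂ (not_both q hq h₁)
  exact ⟨hp.mem_edges_of_mem_support hM hρM hbρ through.1,
    hq.mem_edges_of_mem_support hM hρM hbρ through.2⟩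

end

theorem stmt14_general {V : Type*} (G : SimpleGraph V) (hunic : IsUnicyclic G)
    (M : G.Subgraph) (hM : M.IsPerfectMatching)
    {u : V} (c : G.Walk u u) (hc : c.IsCycle)
    (ρ1 ρ2 : Sym2 V)
    (hρ1 : IsPeg G M c ρ1) (hρ2 : IsPeg G M c ρ2)
    {x y : V} (p q : G.Walk x y) (hpq : p ≠ q)
    (hp : IsCoAugmenting G M.edgeSet p) (hq : IsCoAugmenting G M.edgeSet q) :
    ρ1 ∈ p.edges ∧ ρ2 ∈ p.edges ∧ ρ1 ∈ q.edges ∧ ρ2 ∈ q.edges := by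
  obtain ⟨h1p, h1q⟩ := hρ1.mem_edges_of_isCoAugmenting hunic hM.1 hc hpq hp hq
  obtain ⟨h2p, h2q⟩ := hρ2.mem_edges_of_isCoAugmenting hunic hM.1 hc hpq hp hq
  exact ⟨h1p, h2p, h1q, h2q⟩

/-- In a unicyclic bipartite graph with a unique perfect matching and exactly two pegs,
two distinct co-augmenting paths between the same pair of vertices both contain both pegs. -/
theorem stmt14 {V : Type*} (G : SimpleGraph V) (hunic : IsUnicyclic G)
    (hbip : G.Colorable 2)
    (M : G.Subgraph) (hM : M.IsPerfectMatching)
    (huniq : ∀ N : G.Subgraph, N.IsPerfectMatching → N = M)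
    {u : V} (c : G.Walk u u) (hc : c.IsCycle)
    (ρ1 ρ2 : Sym2 V) (hne : ρ1 ≠ ρ2)
    (hρ1 : IsPeg G M c ρ1) (hρ2 : IsPeg G M c ρ2)
    (honly : ∀ e, IsPeg G M c e → e = ρ1 ∨ e = ρ2)
    {x y : V} (p q : G.Walk x y) (hpq : p ≠ q)
    (hp : IsCoAugmenting G M.edgeSet p) (hq : IsCoAugmenting G M.edgeSet q) :
    ρ1 ∈ p.edges ∧ ρ2 ∈ p.edges ∧ ρ1 ∈ q.edges ∧ ρ2 ∈ q.edges :=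
  stmt14_general G hunic M hM c hc ρ1 ρ2 hρ1 hρ2 p q hpq hp hq
end
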